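/- Assume that Ω^1_{R/K} is a free R-module with basis dx^1,…,dx^d. Let v = (v^a_b) be a d×d matrix over K and let V : R^coord → R^coord be a K-linear derivation that vanishes on the image of R in R^coord and satisfies V(ι(f_i)) = ι( Σ_{a,b : i(b) ≥ 1} v^a_b · ((i − e_b)(a) + 1) · f_{i − e_b + e_a} ) for every f ∈ R and every multi-index i with |i| ≥ 1. Let i_V : Ω^1_{R^coord/K} → R^coord be the unique R^coord-linear map with i_V ∘ D = V, where D is the universal derivation. Let (ω^a_i) be any family of elements of Ω^1_{R^coord/K}, indexed by 1 ≤ a ≤ d and multi-indices i, satisfying: for every f ∈ R and every multi-index k, D(ι(f_k)) + Σ_{a=1}^d Σ_{i+j=k} (j(a)+1) · ι(f_{j+e_a}) • ω^a_i = 0 (with f_0 := f and • the R^coord-module action on Ω^1_{R^coord/K}). Then i_V(ω^a_{e_b}) = − v^a_b for all a, b, and i_V(ω^a_i) = 0 whenever |i| ≠ 1. -/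

import Mathlib

namespace Paper

/-- Multi-indices: finitely supported functions `Fin d → ℕ`. -/
abbrev MIdx (d : ℕ) := Fin d →₀ ℕ

/-- The length `|i|` of a multi-index. -/
def deg {d : ℕ} (i : MIdx d) : ℕ := i.sum fun _ n => n

variable (K R : Type) [Field K] [CharZero K] [CommRing R] [Algebra K R]

/-- The defining relations of the algebra `R^𝐝`. -/
def relSet (d : ℕ) : Set (MvPolynomial (R × MIdx d) R) :=
  {p | (∃ f g : R, ∃ i : MIdx d,
          p = MvPolynomial.X (f + g, i) - MvPolynomial.X (f, i) - MvPolynomial.X (g, i)) ∨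
       (∃ f g : R, ∃ i : MIdx d,
          p = MvPolynomial.X (f * g, i) -
            ∑ q ∈ Finset.HasAntidiagonal.antidiagonal i, MvPolynomial.X (f, q.1) * MvPolynomial.X (g, q.2)) ∨
       (∃ f : R, p = MvPolynomial.X (f, (0 : MIdx d)) - MvPolynomial.C f) ∨
       (∃ (c : K) (i : MIdx d), 1 ≤ deg i ∧ p = MvPolynomial.X (algebraMap K R c, i))}

/-- The commutative `R`-algebra `R^𝐝` generated by the symbols `f_i`. -/
def Rd (d : ℕ) : Type :=
  MvPolynomial (R × MIdx d) R ⧸ Ideal.span (relSet K R d)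

noncomputable instance (d : ℕ) : CommRing (Rd K R d) := Ideal.Quotient.commRing _
noncomputable instance (d : ℕ) : Algebra R (Rd K R d) := Ideal.Quotient.algebra R
noncomputable instance (d : ℕ) : Algebra K (Rd K R d) := Ideal.Quotient.algebra K

/-- The generator `f_i` of `R^𝐝`. -/
noncomputable def gen {d : ℕ} (f : R) (i : MIdx d) : Rd K R d :=
  Ideal.Quotient.mk (Ideal.span (relSet K R d)) (MvPolynomial.X (f, i))

/-- The Taylor series `I(f) = Σ_i f_i t^i ∈ R^𝐝[[t^1,…,t^d]]`. -/
noncomputable def Ifun {d : ℕ} (f : R) : MvPowerSeries (Fin d) (Rd K R d) :=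
  fun i => gen K R f i

end Paper

namespace Paper

variable (K R : Type) [Field K] [CharZero K] [CommRing R] [Algebra K R]

lemma deg_single {d : ℕ} (c : Fin d) : deg (Finsupp.single c (1 : ℕ)) = 1 := by
  simp [deg]

/-- The determinant `det(x^a_{(b)}) ∈ R^𝐝`. -/
noncomputable def detX (d : ℕ) (x : Fin d → R) : Rd K R d :=
  Matrix.det (Matrix.of fun a c => gen K R (x a) (Finsupp.single c 1))

/-- `R^coord`: the localization of `R^𝐝` at `det(x^a_{(b)})`. -/
abbrev Rcoord (d : ℕ) (x : Fin d → R) : Type :=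
  Localization.Away (detX K R d x)

/-- The localization map `ι : R^𝐝 → R^coord`. -/
noncomputable def locMap (d : ℕ) (x : Fin d → R) : Rd K R d →+* Rcoord K R d x :=
  algebraMap _ _

end Paper

/-!
Applying `i_V` to the defining equations of `ω` and using `i_V ∘ D = V` shows that
`y^a_i = i_V(ω^a_i)` solves the linear system `V(f_k) + Σ_a Σ_{i+j=k} (j(a)+1) f_{j+e_a} y^a_i = 0`
(for all `f` and `k`); by the formula for `V`, so does `y^a_{e_b} = -v^a_b`, `y^a_i = 0` for
`|i| ≠ 1`. The system has at most one solution, by well-founded induction on `k`: the terms with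
`i < k` are already known, and what remains is `Σ_a f_{e_a} y^a_k`; for `f = x^1, …, x^d` this is
multiplication by the matrix `(x^m_{(a)})`, which is invertible in `R^coord`.
-/

namespace Paper

open Finsupp Finset.HasAntidiagonal

section MultiIndex

variable {ι M : Type*} [DecidableEq ι] [AddCommMonoid M]

lemma sum_antidiagonal_ite_fst_eq (k e : ι →₀ ℕ) (G : (ι →₀ ℕ) × (ι →₀ ℕ) → M) :
    ∑ q ∈ antidiagonal k, (if q.1 = e then G q else 0) = if e ≤ k then G (e, k - e) else 0 := by
  rw [← Finset.sum_filter, filter_fst_eq_antidiagonal k e]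
  split_ifs <;> simp

lemma sum_antidiagonal_eq_of_forall_fst_lt (k : ι →₀ ℕ) (F : (ι →₀ ℕ) × (ι →₀ ℕ) → M)
    (hF : ∀ q ∈ antidiagonal k, q.1 < k → F q = 0) :
    ∑ q ∈ antidiagonal k, F q = F (k, 0) := by
  refine Finset.sum_eq_single_of_mem (k, 0) (by simp) fun q hq hne => hF q hq ?_
  rw [mem_antidiagonal] at hq
  refine lt_of_le_of_ne (hq ▸ le_self_add) fun h => hne ?_
  rw [h, add_eq_left] at hq
  exact Prod.ext h hq

theorem eq_zero_of_sum_antidiagonal_eq_zero {S : Type*} [CommRing S] [Fintype ι]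
    (g : ι → (ι →₀ ℕ) → S) (hg : IsUnit (Matrix.of fun m a => g m (single a 1)).det)
    (u : ι → (ι →₀ ℕ) → S)
    (hu : ∀ (m : ι) (k : ι →₀ ℕ), ∑ a, ∑ q ∈ antidiagonal k,
      ((q.2 a + 1 : ℕ) : S) * g m (q.2 + single a 1) * u a q.1 = 0) :
    u = 0 := by
  suffices h : ∀ k a, u a k = 0 from funext₂ fun a k => h k a
  intro k
  induction k using WellFoundedLT.induction with
  | _ k ih =>
  have hmul : (Matrix.of fun m a => g m (single a 1)).mulVec (fun a => u a k) = 0 := by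
    funext m
    refine Eq.trans ?_ (hu m k)
    simp only [Matrix.mulVec, dotProduct, Matrix.of_apply]
    refine Finset.sum_congr rfl fun a _ => ?_
    rw [sum_antidiagonal_eq_of_forall_fst_lt k _ fun q _ hq => by rw [ih q.1 hq a, mul_zero]]
    simp
  have hinj := Matrix.mulVec_injective_of_isUnit ((Matrix.isUnit_iff_isUnit_det _).2 hg)
  exact congrFun (hinj (hmul.trans (Matrix.mulVec_zero _).symm))

end MultiIndex

variable {K R : Type} [Field K] [CommRing R] [Algebra K R] {d : ℕ}

lemma gen_zero (f : R) : gen K R f (0 : MIdx d) = algebraMap R (Rd K R d) f :=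
  Ideal.Quotient.eq.2 (Ideal.subset_span (Or.inr (Or.inr (Or.inl ⟨f, rfl⟩))))

lemma isUnit_det_locMap_gen (x : Fin d → R) :
    IsUnit (Matrix.of fun m a => locMap K R d x (gen K R (x m) (single a 1))).det :=
  RingHom.map_det (locMap K R d x) (Matrix.of fun m a => gen K R (x m) (single a 1)) ▸
    IsLocalization.Away.algebraMap_isUnit (detX K R d x)

noncomputable def contractionValue (x : Fin d → R) (v : Matrix (Fin d) (Fin d) K) (a : Fin d)
    (i : MIdx d) : Rcoord K R d x :=
  -∑ c, if i = single c 1 then locMap K R d x (algebraMap R (Rd K R d) (algebraMap K R (v a c)))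
    else 0

/-- The value `V(f_k)` of the derivation induced by `v ∈ gl_d(K)`, before localization. -/
noncomputable def infinitesimalAction (v : Matrix (Fin d) (Fin d) K) (f : R) (k : MIdx d) :
    Rd K R d :=
  ∑ a : Fin d, ∑ c : Fin d,
    if 1 ≤ k c then
      algebraMap R (Rd K R d) (algebraMap K R (v a c)) *
        ((((k - single c 1 : MIdx d) a + 1 : ℕ) : Rd K R d)) *
        gen K R f ((k - single c 1 : MIdx d) + single a 1)
    else 0

lemma derivation_locMap_gen {x : Fin d → R} {v : Matrix (Fin d) (Fin d) K}
    {V : Derivation K (Rcoord K R d x) (Rcoord K R d x)}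
    (hV0 : ∀ r : R, V (locMap K R d x (algebraMap R (Rd K R d) r)) = 0)
    (hV : ∀ (f : R) (i : MIdx d), 1 ≤ deg i →
      V (locMap K R d x (gen K R f i)) = locMap K R d x (infinitesimalAction v f i))
    (f : R) (k : MIdx d) :
    V (locMap K R d x (gen K R f k)) = locMap K R d x (infinitesimalAction v f k) := by
  rcases eq_or_ne k 0 with rfl | hk
  · simp [gen_zero, hV0, infinitesimalAction]
  · exact hV f k (Nat.one_le_iff_ne_zero.2 (mt (degree_eq_zero_iff k).1 hk))

lemma sum_antidiagonal_mul_contractionValue (x : Fin d → R) (v : Matrix (Fin d) (Fin d) K)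
    (f : R) (k : MIdx d) :
    ∑ a, ∑ q ∈ antidiagonal k, ((q.2 a + 1 : ℕ) : Rcoord K R d x) *
        locMap K R d x (gen K R f (q.2 + single a 1)) * contractionValue x v a q.1 =
      -locMap K R d x (infinitesimalAction v f k) := by
  simp only [infinitesimalAction, map_sum, ← Finset.sum_neg_distrib]
  refine Finset.sum_congr rfl fun a _ => ?_
  simp only [contractionValue, mul_neg, Finset.mul_sum, mul_ite, mul_zero, Finset.sum_neg_distrib]
  rw [Finset.sum_comm]
  simp only [sum_antidiagonal_ite_fst_eq, single_le_iff]
  refine congrArg Neg.neg (Finset.sum_congr rfl fun c _ => ?_)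
  split_ifs
  · simp only [map_mul, map_natCast]
    ring
  · simp

end Paper

theorem statement8_general (K R : Type) [Field K] [CommRing R] [Algebra K R]
    (d : ℕ) (x : Fin d → R)
    (v : Matrix (Fin d) (Fin d) K)
    (V : Derivation K (Paper.Rcoord K R d x) (Paper.Rcoord K R d x))
    (hV0 : ∀ r : R, V (Paper.locMap K R d x (algebraMap R (Paper.Rd K R d) r)) = 0)
    (hV : ∀ (f : R) (i : Paper.MIdx d), 1 ≤ Paper.deg i →
      V (Paper.locMap K R d x (Paper.gen K R f i)) =
        Paper.locMap K R d x
          (∑ a : Fin d, ∑ c : Fin d,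
            if 1 ≤ i c then
              algebraMap R (Paper.Rd K R d) (algebraMap K R (v a c)) *
                ((((i - Finsupp.single c 1 : Paper.MIdx d) a + 1 : ℕ) : Paper.Rd K R d)) *
                Paper.gen K R f ((i - Finsupp.single c 1 : Paper.MIdx d) + Finsupp.single a 1)
            else 0))
    (iV : KaehlerDifferential K (Paper.Rcoord K R d x) →ₗ[Paper.Rcoord K R d x]
        Paper.Rcoord K R d x)
    (hiV : ∀ z : Paper.Rcoord K R d x,
      iV (KaehlerDifferential.D K (Paper.Rcoord K R d x) z) = V z)
    (ω : Fin d → Paper.MIdx d → KaehlerDifferential K (Paper.Rcoord K R d x))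
    (hω : ∀ (f : R) (k : Paper.MIdx d),
      KaehlerDifferential.D K (Paper.Rcoord K R d x)
          (Paper.locMap K R d x (Paper.gen K R f k)) +
        ∑ a : Fin d, ∑ q ∈ Finset.HasAntidiagonal.antidiagonal k,
          (((q.2 a + 1 : ℕ) : Paper.Rcoord K R d x) *
              Paper.locMap K R d x (Paper.gen K R f (q.2 + Finsupp.single a 1))) •
            ω a q.1 = 0) :
    (∀ a c : Fin d, iV (ω a (Finsupp.single c 1)) =
        - Paper.locMap K R d x (algebraMap R (Paper.Rd K R d) (algebraMap K R (v a c)))) ∧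
    (∀ (a : Fin d) (i : Paper.MIdx d), Paper.deg i ≠ 1 → iV (ω a i) = 0) := by
  have hcontr : ∀ a i, iV (ω a i) = Paper.contractionValue x v a i := by
    have hu := Paper.eq_zero_of_sum_antidiagonal_eq_zero
      (fun m j => Paper.locMap K R d x (Paper.gen K R (x m) j)) (Paper.isUnit_det_locMap_gen x)
      (fun a i => iV (ω a i) - Paper.contractionValue x v a i) fun m k => by
        have hcontracted := congrArg iV (hω (x m) k)
        simp only [map_add, map_sum, map_smul, smul_eq_mul, map_zero, hiV] at hcontracted
        have hexpected := Paper.sum_antidiagonal_mul_contractionValue x v (x m) k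
        rw [Paper.derivation_locMap_gen hV0 hV] at hcontracted
        simp only [mul_sub, Finset.sum_sub_distrib]
        linear_combination hcontracted - hexpected
    exact fun a i => sub_eq_zero.1 (congrFun₂ hu a i)
  refine ⟨fun a c => ?_, fun a i hi => ?_⟩
  · simp [hcontr, Paper.contractionValue, Finsupp.single_left_inj]
  · rw [hcontr, Paper.contractionValue, neg_eq_zero]
    exact Finset.sum_eq_zero fun c _ =>
      if_neg fun h : i = Finsupp.single c 1 => hi (h ▸ Paper.deg_single c)

/-- For the derivation `V` of `R^coord` corresponding to a matrix
`v ∈ gl_d(K)` (infinitesimal `GL_d(K)`-action), the contraction `i_V` of the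
connection form `ω` satisfies `i_V(ω^a_{e_b}) = −v^a_b` and `i_V(ω^a_i) = 0` for
`|i| ≠ 1`. -/
theorem statement8 (K R : Type) [Field K] [CharZero K] [CommRing R] [Algebra K R]
    (d : ℕ) (hd : 1 ≤ d) (x : Fin d → R)
    (b : Module.Basis (Fin d) R (KaehlerDifferential K R))
    (hb : ∀ a : Fin d, b a = KaehlerDifferential.D K R (x a))
    (v : Matrix (Fin d) (Fin d) K)
    (V : Derivation K (Paper.Rcoord K R d x) (Paper.Rcoord K R d x))
    (hV0 : ∀ r : R, V (Paper.locMap K R d x (algebraMap R (Paper.Rd K R d) r)) = 0)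
    (hV : ∀ (f : R) (i : Paper.MIdx d), 1 ≤ Paper.deg i →
      V (Paper.locMap K R d x (Paper.gen K R f i)) =
        Paper.locMap K R d x
          (∑ a : Fin d, ∑ c : Fin d,
            if 1 ≤ i c then
              algebraMap R (Paper.Rd K R d) (algebraMap K R (v a c)) *
                ((((i - Finsupp.single c 1 : Paper.MIdx d) a + 1 : ℕ) : Paper.Rd K R d)) *
                Paper.gen K R f ((i - Finsupp.single c 1 : Paper.MIdx d) + Finsupp.single a 1)
            else 0))
    (iV : KaehlerDifferential K (Paper.Rcoord K R d x) →ₗ[Paper.Rcoord K R d x]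
        Paper.Rcoord K R d x)
    (hiV : ∀ z : Paper.Rcoord K R d x,
      iV (KaehlerDifferential.D K (Paper.Rcoord K R d x) z) = V z)
    (ω : Fin d → Paper.MIdx d → KaehlerDifferential K (Paper.Rcoord K R d x))
    (hω : ∀ (f : R) (k : Paper.MIdx d),
      KaehlerDifferential.D K (Paper.Rcoord K R d x)
          (Paper.locMap K R d x (Paper.gen K R f k)) +
        ∑ a : Fin d, ∑ q ∈ Finset.HasAntidiagonal.antidiagonal k,
          (((q.2 a + 1 : ℕ) : Paper.Rcoord K R d x) *
              Paper.locMap K R d x (Paper.gen K R f (q.2 + Finsupp.single a 1))) •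
            ω a q.1 = 0) :
    (∀ a c : Fin d, iV (ω a (Finsupp.single c 1)) =
        - Paper.locMap K R d x (algebraMap R (Paper.Rd K R d) (algebraMap K R (v a c)))) ∧
    (∀ (a : Fin d) (i : Paper.MIdx d), Paper.deg i ≠ 1 → iV (ω a i) = 0) :=
  statement8_general K R d x v V hV0 hV iV hiV ω hω
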